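/- Let α be an action of a discrete group Γ on a von Neumann algebra N in standard form, and suppose the projection p onto the U_α-invariant vectors belongs to N. If every α-invariant state on N is a weak-* limit of normal α-invariant states, then every state ψ on L(H) satisfying ψ(U_{α_t}) = 1 for all t ∈ Γ satisfies ψ(p) ≠ 0. -/

import Mathlib

open ComplexOrder

variable {H : Type*} [NormedAddCommGroup H] [InnerProductSpace ℂ H] [CompleteSpace H]

/-- A linear functional on a von Neumann algebra `N ⊆ L(H)` in standard form is *normal*
(σ-weakly continuous) if it is given by a countable, square-summable family of vector
functionals. -/
def NormalFunctional (N : VonNeumannAlgebra H) (φ : ↥N.toStarSubalgebra →ₗ[ℂ] ℂ) : Prop :=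
  ∃ ξ η : ℕ → H, Summable (fun n => ‖ξ n‖ ^ 2) ∧ Summable (fun n => ‖η n‖ ^ 2) ∧
    ∀ x : ↥N.toStarSubalgebra, φ x = ∑' n, (inner ℂ (η n) ((x : H →L[ℂ] H) (ξ n)) : ℂ)

/-- A state on the von Neumann algebra `N`: a positive linear functional of value `1` at `1`. -/
def IsStateOn (N : VonNeumannAlgebra H) (φ : ↥N.toStarSubalgebra →ₗ[ℂ] ℂ) : Prop :=
  φ 1 = 1 ∧ ∀ x : ↥N.toStarSubalgebra, 0 ≤ φ (star x * x)

/-- Standard form data `(N, H, J, P)` for an action of a discrete group `Γ` on a von Neumann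
algebra `N`, together with the standard implementation `U = U_α` of the action `α` (so the
action is `α_t = Ad (U t)`, which preserves `N`, commutes with `J` and preserves the
self-dual cone `P`).  The characteristic standard-form properties of `P` (existence and
uniqueness of representing vectors for positive normal functionals, and the
Powers–Størmer-type inequality) are part of the data. -/
structure StandardAction (Γ : Type*) [Group Γ] (H : Type*) [NormedAddCommGroup H]
    [InnerProductSpace ℂ H] [CompleteSpace H] (N : VonNeumannAlgebra H) where
  /-- the conjugation `J` -/
  J : H → H
  hJ_inner : ∀ ξ η : H, (inner ℂ (J ξ) (J η) : ℂ) = inner ℂ η ξ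
  hJ_invol : ∀ ξ : H, J (J ξ) = ξ
  /-- the self-dual positive cone -/
  P : Set H
  hP_cone : ∀ ζ ∈ P, ∀ r : ℝ, 0 ≤ r → r • ζ ∈ P
  hP_selfdual : ∀ ξ : H, ξ ∈ P ↔ ∀ η ∈ P, 0 ≤ (inner ℂ ξ η : ℂ)
  /-- the implementing unitary representation `U_α` of `Γ` -/
  U : Γ →* unitary (H →L[ℂ] H)
  /-- `Ad (U t)` preserves `N`; this conjugation is the action `α` -/
  hUN : ∀ t : Γ, ∀ x : H →L[ℂ] H, x ∈ N →
    (U t : H →L[ℂ] H) * x * star (U t : H →L[ℂ] H) ∈ N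
  hUJ : ∀ (t : Γ) (ξ : H), (U t : H →L[ℂ] H) (J ξ) = J ((U t : H →L[ℂ] H) ξ)
  hUP : ∀ t : Γ, ∀ ζ ∈ P, (U t : H →L[ℂ] H) ζ ∈ P
  /-- uniqueness of the representing vector in `P` of a positive normal functional -/
  hP_uniq : ∀ ζ₁ ∈ P, ∀ ζ₂ ∈ P,
    (∀ x : H →L[ℂ] H, x ∈ N → (inner ℂ ζ₁ (x ζ₁) : ℂ) = inner ℂ ζ₂ (x ζ₂)) → ζ₁ = ζ₂
  /-- every positive normal functional on `N` is of the form `ω_ζ` for some `ζ ∈ P` -/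
  hP_rep : ∀ φ : ↥N.toStarSubalgebra →ₗ[ℂ] ℂ, NormalFunctional N φ →
    (∀ x : ↥N.toStarSubalgebra, 0 ≤ φ (star x * x)) →
    ∃ ζ ∈ P, ∀ x : ↥N.toStarSubalgebra, φ x = inner ℂ ζ ((x : H →L[ℂ] H) ζ)
  /-- the Powers–Størmer-type inequality `‖ζ₁ - ζ₂‖² ≤ ‖ω_{ζ₁} - ω_{ζ₂}‖` -/
  hP_PS : ∀ ζ₁ ∈ P, ∀ ζ₂ ∈ P, ∀ ε > (0 : ℝ), ∃ x : H →L[ℂ] H, x ∈ N ∧ ‖x‖ ≤ 1 ∧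
    ‖ζ₁ - ζ₂‖ ^ 2 ≤ ‖(inner ℂ ζ₁ (x ζ₁) : ℂ) - inner ℂ ζ₂ (x ζ₂)‖ + ε

/-- A functional on `N` is `α`-invariant, where `α_t = Ad (U t)` is the action encoded by the
standard action data `D`. -/
def StandardAction.Invariant {Γ : Type*} [Group Γ] {N : VonNeumannAlgebra H}
    (D : StandardAction Γ H N) (φ : ↥N.toStarSubalgebra →ₗ[ℂ] ℂ) : Prop :=
  ∀ t : Γ, ∀ x y : ↥N.toStarSubalgebra,
    (y : H →L[ℂ] H) = (D.U t : H →L[ℂ] H) * (x : H →L[ℂ] H) * star (D.U t : H →L[ℂ] H) →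
    φ y = φ x

/-- The representation `U_α` has a spectral gap. -/
def StandardAction.HasSpectralGap {Γ : Type*} [Group Γ] {N : VonNeumannAlgebra H}
    (D : StandardAction Γ H N) : Prop :=
  ¬ (∀ ε > (0 : ℝ), ∀ F : Finset Γ, ∃ ξ : H, ‖ξ‖ = 1 ∧
      (∀ η : H, (∀ t : Γ, (D.U t : H →L[ℂ] H) η = η) → (inner ℂ ξ η : ℂ) = 0) ∧
      ∀ t ∈ F, ‖(D.U t : H →L[ℂ] H) ξ - ξ‖ < ε)

/-!
Positivity of `ψ` together with `ψ (U t) = ψ 1` puts `U t - 1` in the left kernel of `ψ`, so by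
Cauchy–Schwarz `ψ` is invariant under `Ad (U t)`. Its restriction to `N` is then an `α`-invariant
state, which at `p` is within `1/2` of a normal invariant state `g = ω_ζ` with `ζ ∈ P`. Uniqueness
of the representing vector in `P` forces `ζ` to be `U`-fixed, so `g p = ‖ζ‖² = 1` and `ψ p ≠ 0`.
-/

namespace PositiveLinearMap

section NonUnital

variable {A : Type*} [NonUnitalCStarAlgebra A] [PartialOrder A] [StarOrderedRing A]
  (f : A →ₚ[ℂ] ℂ)

lemma apply_mul_eq_zero_of_apply_star_mul_self_eq_zero {a : A} (ha : f (star a * a) = 0)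
    (b : A) : f (b * a) = 0 := by
  have hnorm : ‖f.toPreGNS a‖ = 0 := by
    have h := f.preGNS_norm_sq (f.toPreGNS a)
    rw [ofPreGNS_toPreGNS, ha] at h
    exact_mod_cast pow_eq_zero_iff (n := 2) (by norm_num) |>.mp h
  have hCS := norm_inner_le_norm (𝕜 := ℂ) (f.toPreGNS (star b)) (f.toPreGNS a)
  rw [hnorm, mul_zero, preGNS_inner_def, ofPreGNS_toPreGNS, ofPreGNS_toPreGNS, star_star] at hCS
  exact norm_le_zero_iff.mp hCS

end NonUnital

variable {A : Type*} [CStarAlgebra A] [PartialOrder A] [StarOrderedRing A]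
  (f : A →ₚ[ℂ] ℂ) {u : A}

lemma apply_star_eq_apply_one (hfu : f u = f 1) : f (star u) = f 1 := by
  rw [map_star, hfu, ← map_star, star_one]

lemma apply_mul_unitary (hu : u ∈ unitary A) (hfu : f u = f 1) (b : A) : f (b * u) = f b := by
  have hkernel : f (star (u - 1) * (u - 1)) = 0 := by
    have hexpand : star (u - 1) * (u - 1) = star u * u - star u - u + 1 := by
      simp only [star_sub, star_one, sub_mul, mul_sub, one_mul, mul_one]
      abel
    rw [hexpand, Unitary.star_mul_self_of_mem hu, map_add, map_sub, map_sub,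
      f.apply_star_eq_apply_one hfu, hfu]
    ring
  have h := f.apply_mul_eq_zero_of_apply_star_mul_self_eq_zero hkernel b
  rwa [mul_sub, mul_one, map_sub, sub_eq_zero] at h

lemma apply_unitary_mul (hu : u ∈ unitary A) (hfu : f u = f 1) (b : A) : f (u * b) = f b := by
  rw [← star_star (u * b), map_star, star_mul,
    f.apply_mul_unitary (Unitary.star_mem hu) (f.apply_star_eq_apply_one hfu), ← map_star,
    star_star]

lemma apply_unitary_mul_mul_star (hu : u ∈ unitary A) (hfu : f u = f 1) (b : A) :
    f (u * b * star u) = f b := by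
  rw [f.apply_mul_unitary (Unitary.star_mem hu) (f.apply_star_eq_apply_one hfu),
    f.apply_unitary_mul hu hfu]

end PositiveLinearMap

lemma isStateOn_comp_subtype (N : VonNeumannAlgebra H) {ψ : (H →L[ℂ] H) →ₗ[ℂ] ℂ}
    (hψ1 : ψ 1 = 1) (hpos : ∀ x : H →L[ℂ] H, 0 ≤ ψ (star x * x)) :
    IsStateOn N (ψ ∘ₗ N.toStarSubalgebra.subtype.toLinearMap) :=
  ⟨hψ1, fun x => hpos x⟩

namespace StandardAction

variable {Γ : Type*} [Group Γ] {N : VonNeumannAlgebra H} (D : StandardAction Γ H N)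

lemma star_mul_mul_mem (t : Γ) {x : H →L[ℂ] H} (hx : x ∈ N) :
    star (D.U t : H →L[ℂ] H) * x * (D.U t : H →L[ℂ] H) ∈ N := by
  have h := D.hUN t⁻¹ x hx
  rwa [map_inv, ← Unitary.star_eq_inv, Unitary.coe_star, star_star] at h

lemma invariant_comp_subtype {ψ : (H →L[ℂ] H) →ₗ[ℂ] ℂ}
    (hψ : ∀ t : Γ, ∀ x : H →L[ℂ] H,
      ψ ((D.U t : H →L[ℂ] H) * x * star (D.U t : H →L[ℂ] H)) = ψ x) :
    D.Invariant (ψ ∘ₗ N.toStarSubalgebra.subtype.toLinearMap) := by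
  intro t x y hxy
  change ψ (y : H →L[ℂ] H) = ψ x
  rw [hxy, hψ]

lemma U_apply_eq_self_of_invariant {g : ↥N.toStarSubalgebra →ₗ[ℂ] ℂ} (hg : D.Invariant g)
    {ζ : H} (hζP : ζ ∈ D.P) (hζ : ∀ x : ↥N.toStarSubalgebra, g x = inner ℂ ζ ((x : H →L[ℂ] H) ζ))
    (t : Γ) : (D.U t : H →L[ℂ] H) ζ = ζ := by
  set u : H →L[ℂ] H := ↑(D.U t)
  refine D.hP_uniq (u ζ) (D.hUP t ζ hζP) ζ hζP fun x hx => ?_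
  have hconj : u * (star u * x * u) * star u = x := by
    have hu : u * star u = 1 := Unitary.coe_mul_star_self (D.U t)
    rw [← mul_assoc, ← mul_assoc, hu, one_mul, mul_assoc, hu, mul_one]
  let x' : ↥N.toStarSubalgebra := ⟨star u * x * u, D.star_mul_mul_mem t hx⟩
  calc (inner ℂ (u ζ) (x (u ζ)) : ℂ) = inner ℂ ζ ((star u * x * u) ζ) := by
        rw [mul_apply_eq_comp, mul_apply_eq_comp,
          ContinuousLinearMap.star_eq_adjoint, ContinuousLinearMap.adjoint_inner_right]
    _ = g x' := (hζ x').symm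
    _ = g ⟨x, hx⟩ := (hg t x' ⟨x, hx⟩ hconj.symm).symm
    _ = inner ℂ ζ (x ζ) := hζ _

lemma apply_proj_eq_one {g : ↥N.toStarSubalgebra →ₗ[ℂ] ℂ} (hg_state : IsStateOn N g)
    (hg_inv : D.Invariant g) (hg_normal : NormalFunctional N g) {p : H →L[ℂ] H} (hpN : p ∈ N)
    (hp : ∀ ξ : H, (∀ t : Γ, (D.U t : H →L[ℂ] H) ξ = ξ) → p ξ = ξ) :
    g ⟨p, hpN⟩ = 1 := by
  obtain ⟨ζ, hζP, hζ⟩ := D.hP_rep g hg_normal hg_state.2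
  have hpζ : p ζ = ζ := hp ζ (D.U_apply_eq_self_of_invariant hg_inv hζP hζ)
  rw [hζ, ← hg_state.1, hζ]
  simp [hpζ]

end StandardAction

theorem standard_implies_state_nonvanishing_on_proj_general
    {Γ : Type*} [Group Γ]
    {H : Type*} [NormedAddCommGroup H] [InnerProductSpace ℂ H] [CompleteSpace H]
    {N : VonNeumannAlgebra H} (D : StandardAction Γ H N)
    (p : H →L[ℂ] H)
    (hfix : ∀ ξ : H, p ξ = ξ ↔ ∀ t : Γ, (D.U t : H →L[ℂ] H) ξ = ξ)
    (hpN : p ∈ N)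
    (hstd : ∀ m : ↥N.toStarSubalgebra →ₗ[ℂ] ℂ, IsStateOn N m → D.Invariant m →
      ∀ ε > (0 : ℝ), ∀ F : Finset ↥N.toStarSubalgebra,
        ∃ g : ↥N.toStarSubalgebra →ₗ[ℂ] ℂ,
          IsStateOn N g ∧ D.Invariant g ∧ NormalFunctional N g ∧
          ∀ x ∈ F, ‖m x - g x‖ < ε) :
    ∀ ψ : (H →L[ℂ] H) →ₗ[ℂ] ℂ,
      (∀ x : H →L[ℂ] H, 0 ≤ ψ (star x * x)) → ψ 1 = 1 →
      (∀ t : Γ, ψ (D.U t : H →L[ℂ] H) = 1) → ψ p ≠ 0 := by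
  intro ψ hpos hψ1 hψU hψp
  let f : (H →L[ℂ] H) →ₚ[ℂ] ℂ := PositiveLinearMap.mk₀ ψ fun x hx => by
    obtain ⟨y, rfl⟩ := CStarAlgebra.nonneg_iff_eq_star_mul_self.mp hx
    exact hpos y
  have hψ_conj : ∀ t : Γ, ∀ x : H →L[ℂ] H,
      ψ ((D.U t : H →L[ℂ] H) * x * star (D.U t : H →L[ℂ] H)) = ψ x := fun t x =>
    f.apply_unitary_mul_mul_star (D.U t).2 ((hψU t).trans hψ1.symm) x
  obtain ⟨g, hg_state, hg_inv, hg_normal, hg_close⟩ :=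
    hstd _ (isStateOn_comp_subtype N hψ1 hpos) (D.invariant_comp_subtype hψ_conj)
      (1 / 2) (by norm_num) {⟨p, hpN⟩}
  have hgp := D.apply_proj_eq_one hg_state hg_inv hg_normal hpN fun ξ => (hfix ξ).mpr
  have hclose := hg_close ⟨p, hpN⟩ (Finset.mem_singleton_self _)
  rw [hgp] at hclose
  change ‖ψ p - 1‖ < 1 / 2 at hclose
  norm_num [hψp] at hclose

/-- Suppose the orthogonal projection `p` onto the `U_α`-invariant vectors
belongs to `N`.  If every `α`-invariant state on `N` is a weak-* limit of normal
`α`-invariant states (statement (G4)), then every state `ψ` on `L(H)` with `ψ (U_{α_t}) = 1`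
for all `t ∈ Γ` satisfies `ψ p ≠ 0` (statement (G1)). -/
theorem standard_implies_state_nonvanishing_on_proj
    {Γ : Type*} [Group Γ]
    {H : Type*} [NormedAddCommGroup H] [InnerProductSpace ℂ H] [CompleteSpace H]
    {N : VonNeumannAlgebra H} (D : StandardAction Γ H N)
    (p : H →L[ℂ] H) (hsa : IsSelfAdjoint p) (hidem : p * p = p)
    (hfix : ∀ ξ : H, p ξ = ξ ↔ ∀ t : Γ, (D.U t : H →L[ℂ] H) ξ = ξ)
    (hpN : p ∈ N)
    (hstd : ∀ m : ↥N.toStarSubalgebra →ₗ[ℂ] ℂ, IsStateOn N m → D.Invariant m →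
      ∀ ε > (0 : ℝ), ∀ F : Finset ↥N.toStarSubalgebra,
        ∃ g : ↥N.toStarSubalgebra →ₗ[ℂ] ℂ,
          IsStateOn N g ∧ D.Invariant g ∧ NormalFunctional N g ∧
          ∀ x ∈ F, ‖m x - g x‖ < ε) :
    ∀ ψ : (H →L[ℂ] H) →ₗ[ℂ] ℂ,
      (∀ x : H →L[ℂ] H, 0 ≤ ψ (star x * x)) → ψ 1 = 1 →
      (∀ t : Γ, ψ (D.U t : H →L[ℂ] H) = 1) → ψ p ≠ 0 :=
  standard_implies_state_nonvanishing_on_proj_general D p hfix hpN hstd
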